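/- Every circulant density matrix ρ of dimension n = pq is separable in C^p ⊗ C^q. -/

import Mathlib

open Matrix Kronecker
open scoped BigOperators Classical ComplexOrder

noncomputable section

def grho {V : Type*} [Fintype V] [DecidableEq V] (G : SimpleGraph V) : Matrix V V ℂ :=
  ((2 * G.edgeFinset.card : ℂ))⁻¹ • G.lapMatrix ℂ

def degM {V : Type*} [Fintype V] [DecidableEq V] (G : SimpleGraph V) : Matrix V V ℂ :=
  Matrix.diagonal fun v => (G.degree v : ℂ)

def ptB {p q : ℕ} {α : Type*} (A : Matrix (Fin p × Fin q) (Fin p × Fin q) α) :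
    Matrix (Fin p × Fin q) (Fin p × Fin q) α :=
  fun x y => A (x.1, y.2) (y.1, x.2)

def gptB {p q : ℕ} (G : SimpleGraph (Fin p × Fin q)) : SimpleGraph (Fin p × Fin q) where
  Adj x y := G.Adj (x.1, y.2) (y.1, x.2)
  symm := ⟨by intro x y h; exact G.adj_symm h⟩
  loopless := ⟨by intro x h; exact G.irrefl h⟩

def IsDensityMatrix {n : Type*} [Fintype n] [DecidableEq n] (A : Matrix n n ℂ) : Prop :=
  A.PosSemidef ∧ A.trace = 1

def Separable {p q : ℕ} (ρ : Matrix (Fin p × Fin q) (Fin p × Fin q) ℂ) : Prop :=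
  ∃ (m : ℕ) (w : Fin m → ℝ) (σ : Fin m → Matrix (Fin p) (Fin p) ℂ)
    (τ : Fin m → Matrix (Fin q) (Fin q) ℂ),
    (∀ k, 0 ≤ w k) ∧ (∑ k, w k = 1) ∧
    (∀ k, IsDensityMatrix (σ k)) ∧ (∀ k, IsDensityMatrix (τ k)) ∧
    ρ = ∑ k, (w k : ℂ) • (σ k ⊗ₖ τ k)

def proj {n : Type*} (ψ : n → ℂ) : Matrix n n ℂ := vecMulVec ψ (star ψ)

/-! The Fourier vectors `e_k x = ω ^ (k x)`, `ω` a primitive `n`-th root of unity, diagonalise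
every circulant matrix, so `ρ = ∑ₖ λₖ • (n⁻¹ • e_k e_kᴴ)` with eigenvalues `λₖ ≥ 0` (as `ρ ≥ 0`)
summing to `tr ρ = 1`. Under `x = a q + b` one has `e_k x = (ω ^ q) ^ (k a) * ω ^ (k b)`, so every
`e_k` is a product vector and each term of the sum is a product of density matrices. -/

lemma trace_proj_of_norm_eq_one {n : Type*} [Fintype n] {ψ : n → ℂ} (hψ : ∀ x, ‖ψ x‖ = 1) :
    (proj ψ).trace = Fintype.card n := by
  simp [proj, trace_vecMulVec, dotProduct, Complex.mul_conj', hψ]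

lemma isDensityMatrix_inv_card_smul_proj {n : Type*} [Fintype n] [DecidableEq n] [Nonempty n]
    {ψ : n → ℂ} (hψ : ∀ x, ‖ψ x‖ = 1) :
    IsDensityMatrix ((Fintype.card n : ℂ)⁻¹ • proj ψ) :=
  ⟨(posSemidef_vecMulVec_self_star ψ).smul (inv_nonneg.2 (Nat.cast_nonneg _)), by
    rw [trace_smul, trace_proj_of_norm_eq_one hψ, smul_eq_mul,
      inv_mul_cancel₀ (Nat.cast_ne_zero.2 Fintype.card_ne_zero)]⟩

lemma proj_kronecker {m n : Type*} (ψ : m → ℂ) (φ : n → ℂ) :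
    proj (fun x : m × n => ψ x.1 * φ x.2) = proj ψ ⊗ₖ proj φ := by
  ext x y
  simp only [proj, vecMulVec_apply, kroneckerMap_apply, Pi.star_apply, star_mul']
  ring

lemma Matrix.PosSemidef.nonneg_of_mulVec_eq_smul {n : Type*} [Fintype n] {A : Matrix n n ℂ}
    (hA : A.PosSemidef) {x : n → ℂ} (hx : x ≠ 0) {μ : ℂ} (h : A *ᵥ x = μ • x) : 0 ≤ μ := by
  have hpos : 0 < star x ⬝ᵥ x := dotProduct_star_self_pos_iff.2 hx
  have hnonneg : 0 ≤ μ * (star x ⬝ᵥ x) := by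
    simpa [h, dotProduct_smul] using hA.dotProduct_mulVec_nonneg x
  simpa [hpos.ne'] using mul_nonneg hnonneg (inv_nonneg.2 hpos.le)

lemma separable_of_eq_sum {p q : ℕ} {ι : Type*} [Fintype ι]
    {ρ : Matrix (Fin p × Fin q) (Fin p × Fin q) ℂ} (c : ι → ℂ)
    (σ : ι → Matrix (Fin p) (Fin p) ℂ) (τ : ι → Matrix (Fin q) (Fin q) ℂ)
    (hc : ∀ i, 0 ≤ c i) (hc1 : ∑ i, c i = 1)
    (hσ : ∀ i, IsDensityMatrix (σ i)) (hτ : ∀ i, IsDensityMatrix (τ i))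
    (hρ : ρ = ∑ i, c i • (σ i ⊗ₖ τ i)) : Separable ρ := by
  let e := (Fintype.equivFin ι).symm
  have hre : ∀ i, ((c i).re : ℂ) = c i := fun i => (Complex.eq_re_of_ofReal_le (hc i)).symm
  refine ⟨Fintype.card ι, fun k => (c (e k)).re, σ ∘ e, τ ∘ e,
    fun k => (Complex.nonneg_iff.1 (hc _)).1, ?_, fun k => hσ _, fun k => hτ _, ?_⟩
  · rw [e.sum_comp (fun i => (c i).re), ← Complex.re_sum, hc1, Complex.one_re]
  · simp only [hρ, Function.comp_apply, hre]
    exact (e.sum_comp fun i => c i • (σ i ⊗ₖ τ i)).symm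

def fourierVec (ω : ℂ) (k : ℕ) {n : ℕ} (x : Fin n) : ℂ := ω ^ (k * x.val)

lemma norm_fourierVec {ω : ℂ} (hω : ‖ω‖ = 1) (k : ℕ) {n : ℕ} (x : Fin n) :
    ‖fourierVec ω k x‖ = 1 := by
  simp [fourierVec, hω]

lemma fourierVec_finProdFinEquiv (ω : ℂ) (k : ℕ) {p q : ℕ} (x : Fin p × Fin q) :
    fourierVec ω k (finProdFinEquiv x) = fourierVec (ω ^ q) k x.1 * fourierVec ω k x.2 := by
  simp only [fourierVec, finProdFinEquiv_apply_val, ← pow_mul, ← pow_add]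
  ring_nf

lemma reindex_proj_fourierVec (ω : ℂ) (k : ℕ) {p q : ℕ} :
    reindex finProdFinEquiv.symm finProdFinEquiv.symm (proj (fourierVec ω k (n := p * q))) =
      proj (fourierVec (ω ^ q) k) ⊗ₖ proj (fourierVec ω k) := by
  rw [← proj_kronecker]
  exact congrArg proj (funext (fourierVec_finProdFinEquiv ω k))

section Circulant

variable {n : ℕ} [NeZero n] {ω : ℂ}

def circulantEigenvalue (ω : ℂ) (v : Fin n → ℂ) (k : ℕ) : ℂ :=
  ∑ j, v j * star (fourierVec ω k j)

lemma fourierVec_sub (hω : IsPrimitiveRoot ω n) (k : ℕ) (x y : Fin n) :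
    fourierVec ω k (x - y) = fourierVec ω k x * star (fourierVec ω k y) := by
  have hmul : fourierVec ω k (x - y) * fourierVec ω k y = fourierVec ω k x := by
    simp only [fourierVec, ← pow_add, ← mul_add]
    refine pow_eq_pow_of_modEq (Nat.ModEq.mul_left k ?_) hω.pow_eq_one
    rw [Nat.ModEq, ← Fin.val_add, sub_add_cancel, Nat.mod_eq_of_lt x.isLt]
  have hy : fourierVec ω k y * star (fourierVec ω k y) = 1 := by
    rw [Complex.star_def, Complex.mul_conj',
      norm_fourierVec (hω.norm'_eq_one (NeZero.ne n)), Complex.ofReal_one, one_pow]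
  rw [← hmul, mul_assoc, hy, mul_one]

lemma sum_fourierVec_mul_star (hω : IsPrimitiveRoot ω n) (x y : Fin n) :
    ∑ k : Fin n, fourierVec ω k x * star (fourierVec ω k y) = if x = y then (n : ℂ) else 0 := by
  set ζ := ω ^ (x - y).val
  have hζ : ∀ k : ℕ, fourierVec ω k (x - y) = ζ ^ k := fun k => by
    rw [fourierVec, mul_comm, pow_mul]
  simp_rw [← fourierVec_sub hω, hζ]
  rw [Fin.sum_univ_eq_sum_range (ζ ^ ·)]
  split_ifs with hxy
  · simp [ζ, hxy]
  · have hζ1 : ζ ≠ 1 := fun h => hxy <| sub_eq_zero.1 <| Fin.ext <|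
      Nat.eq_zero_of_dvd_of_lt ((hω.pow_eq_one_iff_dvd _).1 h) (x - y).isLt
    have hζn : ζ ^ n = 1 := by rw [pow_right_comm, hω.pow_eq_one, one_pow]
    rw [geom_sum_eq hζ1, hζn, sub_self, zero_div]

lemma circulant_mulVec_fourierVec (hω : IsPrimitiveRoot ω n) (v : Fin n → ℂ) (k : ℕ) :
    circulant v *ᵥ fourierVec ω k = circulantEigenvalue ω v k • fourierVec ω k := by
  ext x
  simp only [mulVec, dotProduct, circulant_apply, Pi.smul_apply, smul_eq_mul,
    circulantEigenvalue, Finset.sum_mul]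
  rw [← (Equiv.subLeft x).sum_comp]
  refine Finset.sum_congr rfl fun j _ => ?_
  simp only [Equiv.subLeft_apply, sub_sub_cancel, fourierVec_sub hω k x j]
  ring

lemma circulant_eq_sum_proj (hω : IsPrimitiveRoot ω n) (v : Fin n → ℂ) :
    circulant v =
      ∑ k : Fin n, circulantEigenvalue ω v k • ((n : ℂ)⁻¹ • proj (fourierVec ω k)) := by
  ext x y
  have hn : (n : ℂ) ≠ 0 := Nat.cast_ne_zero.2 (NeZero.ne n)
  calc circulant v x y
      = (n : ℂ)⁻¹ *
          ∑ z, circulant v x z * ∑ k : Fin n, fourierVec ω k z * star (fourierVec ω k y) := by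
        simp only [sum_fourierVec_mul_star hω, mul_ite, mul_zero, Finset.sum_ite_eq',
          Finset.mem_univ, if_true, circulant_apply]
        field_simp
    _ = (n : ℂ)⁻¹ *
          ∑ k : Fin n, (circulant v *ᵥ fourierVec ω k) x * star (fourierVec ω k y) := by
        simp only [mulVec, dotProduct, Finset.mul_sum, Finset.sum_mul]
        rw [Finset.sum_comm]
        simp only [mul_assoc]
    _ = _ := by
        simp only [circulant_mulVec_fourierVec hω, Matrix.sum_apply, Matrix.smul_apply, proj,
          vecMulVec_apply, Pi.star_apply, Pi.smul_apply, smul_eq_mul, Finset.mul_sum]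
        refine Finset.sum_congr rfl fun k _ => by ring

lemma circulantEigenvalue_nonneg (hω : IsPrimitiveRoot ω n) {v : Fin n → ℂ}
    (hv : (circulant v).PosSemidef) (k : ℕ) : 0 ≤ circulantEigenvalue ω v k := by
  refine hv.nonneg_of_mulVec_eq_smul (fun h => ?_) (circulant_mulVec_fourierVec hω v k)
  have h0 := norm_fourierVec (hω.norm'_eq_one (NeZero.ne n)) k (0 : Fin n)
  simp [h] at h0

lemma sum_circulantEigenvalue (hω : IsPrimitiveRoot ω n) (v : Fin n → ℂ) :
    ∑ k : Fin n, circulantEigenvalue ω v k = (circulant v).trace := by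
  have h1 := hω.norm'_eq_one (NeZero.ne n)
  rw [circulant_eq_sum_proj hω v, trace_sum]
  simp [trace_smul, trace_proj_of_norm_eq_one (norm_fourierVec h1 _)]

end Circulant

theorem stmt18 (p q : ℕ) (v : Fin (p * q) → ℂ)
    (hpsd : (Matrix.circulant v).PosSemidef)
    (htr : (Matrix.circulant v).trace = 1) :
    Separable (Matrix.reindex finProdFinEquiv.symm finProdFinEquiv.symm
      (Matrix.circulant v)) := by
  have hn : p * q ≠ 0 := by
    intro h
    have : IsEmpty (Fin (p * q)) := h ▸ Fin.isEmpty'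
    simp [trace] at htr
  have : NeZero p := ⟨left_ne_zero_of_mul hn⟩
  have : NeZero q := ⟨right_ne_zero_of_mul hn⟩
  have : NeZero (p * q) := ⟨hn⟩
  obtain ⟨ω, hω⟩ : ∃ ω : ℂ, IsPrimitiveRoot ω (p * q) := ⟨_, Complex.isPrimitiveRoot_exp _ hn⟩
  have hω1 : ‖ω‖ = 1 := hω.norm'_eq_one hn
  have hωq : ‖ω ^ q‖ = 1 := by rw [norm_pow, hω1, one_pow]
  refine separable_of_eq_sum (fun k : Fin (p * q) => circulantEigenvalue ω v k)
    (fun k => (p : ℂ)⁻¹ • proj (fourierVec (ω ^ q) k))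
    (fun k => (q : ℂ)⁻¹ • proj (fourierVec ω k))
    (fun k => circulantEigenvalue_nonneg hω hpsd k) (by rw [sum_circulantEigenvalue hω, htr])
    (fun k => by simpa using isDensityMatrix_inv_card_smul_proj (norm_fourierVec hωq k))
    (fun k => by simpa using isDensityMatrix_inv_card_smul_proj (norm_fourierVec hω1 k)) ?_
  rw [circulant_eq_sum_proj hω v, ← coe_reindexLinearEquiv ℂ ℂ, map_sum]
  refine Finset.sum_congr rfl fun k _ => ?_
  rw [map_smul, map_smul, coe_reindexLinearEquiv, reindex_proj_fourierVec, smul_kronecker,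
    kronecker_smul, smul_smul, smul_smul, smul_smul, Nat.cast_mul, mul_inv, mul_assoc]
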